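/- Let R be a commutative ring in which -1 is a square, and let (a_1, a_2, a_3) ∈ Um_3(R) be a unimodular row. Then (-a_1, a_2, a_3) and (a_1, a_2, a_3) are in the same elementary orbit, i.e., there exists E ∈ E_3(R) with (-a_1, a_2, a_3) = (a_1, a_2, a_3)·E. -/

import Mathlib

open Matrix Polynomial

/-- Membership in the subgroup `E_n(R)` of `GL_n(R)` generated by the elementary
matrices `1 + r·e_{ij}` (`r ∈ R`, `i ≠ j`).  Since the inverse of an elementary
matrix is again elementary, this subgroup coincides with the multiplicative
closure of the set of elementary matrices. -/
def IsElementary {ι : Type} [DecidableEq ι] [Fintype ι] {R : Type} [CommRing R]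
    (M : Matrix ι ι R) : Prop :=
  M ∈ Submonoid.closure
    {A : Matrix ι ι R | ∃ (i j : ι) (r : R), i ≠ j ∧ A = 1 + Matrix.single i j r}

/-- A row `v` of length `n` is unimodular if its entries generate the unit ideal. -/
def IsUnimodular {R : Type} [CommRing R] {n : ℕ} (v : Fin n → R) : Prop :=
  ∃ w : Fin n → R, ∑ i, v i * w i = 1

/-- Block diagonal sum `M ⊥ N`. -/
def oplus {R : Type} [CommRing R] {a b : ℕ} (M : Matrix (Fin a) (Fin a) R)
    (N : Matrix (Fin b) (Fin b) R) : Matrix (Fin (a + b)) (Fin (a + b)) R :=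
  Matrix.reindex finSumFinEquiv finSumFinEquiv (Matrix.fromBlocks M 0 0 N)

/-- Reindexing a square matrix along an equality of sizes. -/
def matCast {R : Type} [CommRing R] {a b : ℕ} (h : a = b)
    (M : Matrix (Fin a) (Fin a) R) : Matrix (Fin b) (Fin b) R :=
  Matrix.reindex (finCongr h) (finCongr h) M

/-- `ψ_m` : the block diagonal sum of copies of `[[0,1],[-1,0]]` (`m` even). -/
def psi (R : Type) [CommRing R] (m : ℕ) : Matrix (Fin m) (Fin m) R :=
  fun i j =>
    if (i : ℕ) + 1 = (j : ℕ) ∧ (i : ℕ) % 2 = 0 then 1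
    else if (j : ℕ) + 1 = (i : ℕ) ∧ (j : ℕ) % 2 = 0 then -1
    else 0

/-- `σ_m` : the block diagonal sum of copies of `[[0,1],[1,0]]` (`m` even). -/
def sigmaMat (R : Type) [CommRing R] (m : ℕ) : Matrix (Fin m) (Fin m) R :=
  fun i j =>
    if ((i : ℕ) + 1 = (j : ℕ) ∧ (i : ℕ) % 2 = 0) ∨
       ((j : ℕ) + 1 = (i : ℕ) ∧ (j : ℕ) % 2 = 0) then 1
    else 0

/-- The relation `∼` on invertible skew-symmetric matrices: for `G` of size
`2n = a` and `G'` of size `2m = b`, `G ∼ G'` iff there are `t ≥ 0` and an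
elementary matrix `E ∈ E_{2(m+n+t)}(R)` with
`G ⊥ ψ_{2(m+t)} = Eᵗ (G' ⊥ ψ_{2(n+t)}) E`. -/
def WittEquiv {R : Type} [CommRing R] {a b : ℕ} (G : Matrix (Fin a) (Fin a) R)
    (G' : Matrix (Fin b) (Fin b) R) : Prop :=
  ∃ (t : ℕ) (E : Matrix (Fin (a + (b + 2 * t))) (Fin (a + (b + 2 * t))) R),
    IsElementary E ∧
      oplus G (psi R (b + 2 * t)) =
        Eᵀ * matCast (by omega) (oplus G' (psi R (a + 2 * t))) * E

/-- The `4 × 4` invertible skew-symmetric matrix `V(v, w)` associated to a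
unimodular row `v` with completion `w` (`v · wᵗ = 1`). -/
def VMat {R : Type} [CommRing R] (v w : Fin 3 → R) : Matrix (Fin 4) (Fin 4) R :=
  !![0, v 0, v 1, v 2;
     -(v 0), 0, w 2, -(w 1);
     -(v 1), -(w 2), 0, w 0;
     -(v 2), w 1, -(w 0), 0]

/-- `n`-fold orthogonal (block diagonal) sum of a matrix with itself. -/
def oplusIter {R : Type} [CommRing R] {a : ℕ} (M : Matrix (Fin a) (Fin a) R) :
    (n : ℕ) → Matrix (Fin (n * a)) (Fin (n * a)) R
  | 0 => 0
  | n + 1 => matCast (by ring) (oplus M (oplusIter M n))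

/-- The stabilization `diag(M, I_{n-d})` of a `d × d` matrix to an `n × n` matrix. -/
def stab {R : Type} [CommRing R] {d n : ℕ} (M : Matrix (Fin d) (Fin d) R) :
    Matrix (Fin n) (Fin n) R :=
  fun i j =>
    if hi : (i : ℕ) < d then
      if hj : (j : ℕ) < d then M ⟨i, hi⟩ ⟨j, hj⟩ else 0
    else if (i : ℕ) = (j : ℕ) then 1 else 0


/-! Let `(a, b, c)` be unimodular, say `a x + b y + c z = 1`, and let `u` be a unit. The
matrix `P = [[a, b], [-y, x]]` has determinant `1 - c z`, so modulo `c` the row `(a, b)` is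
`(1, 0) P` and `(u a, u b)` is `(u, 0) P`. Three elementary operations take `(1, 0)` to
`(u, 0)`; conjugated by `P` they become transvections `1 + m nᵀ` with `n₃ = 0` and
`n ⬝ m = 0`, which lie in `E₃` because `1 + m nᵀ` is a commutator of elementary matrices up to
an elementary factor. Choosing the third coordinates of the `m` suitably removes the error
modulo `c`, so `(a, b, c)` reaches `(u a, u b, c)`. Applying `diag(u, u⁻¹, 1)` then gives
`(u² a, b, c)`, and `u² = -1` gives `(-a, b, c)`. -/

section Elementary

variable {ι : Type} [DecidableEq ι] {R : Type} [CommRing R]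

theorem vecMulVec_single_single (i j : ι) (r : R) :
    vecMulVec (Pi.single i r) (Pi.single j 1) = single i j r := by
  ext a b
  simp only [vecMulVec_apply, single_apply, Pi.single_apply]
  split_ifs <;> simp_all

variable [Fintype ι]

theorem one_add_vecMulVec_mul_one_add_vecMulVec {u v w x : ι → R} (h : v ⬝ᵥ w = 0) :
    (1 + vecMulVec u v) * (1 + vecMulVec w x) = 1 + vecMulVec u v + vecMulVec w x := by
  simp [add_mul, mul_add, vecMulVec_mul_vecMulVec, h, add_assoc]

theorem IsElementary.one : IsElementary (1 : Matrix ι ι R) :=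
  Submonoid.one_mem _

theorem IsElementary.mul {A B : Matrix ι ι R} (hA : IsElementary A) (hB : IsElementary B) :
    IsElementary (A * B) :=
  Submonoid.mul_mem _ hA hB

theorem isElementary_one_add_single {i j : ι} (hij : i ≠ j) (r : R) :
    IsElementary (1 + single i j r) :=
  Submonoid.subset_closure ⟨i, j, r, hij, rfl⟩

theorem IsElementary.transpose {A : Matrix ι ι R} (hA : IsElementary A) : IsElementary Aᵀ := by
  induction hA using Submonoid.closure_induction with
  | mem A hA =>
    obtain ⟨i, j, r, hij, rfl⟩ := hA
    simpa [transpose_single] using isElementary_one_add_single hij.symm r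
  | one => simpa using IsElementary.one
  | mul A B _ _ hA hB => simpa [transpose_mul] using hB.mul hA

theorem isElementary_one_add_vecMulVec_single {k : ι} {u : ι → R} (hu : u k = 0) :
    IsElementary (1 + vecMulVec u (Pi.single k 1)) := by
  have partial_sums : ∀ s : Finset ι, k ∉ s →
      IsElementary (1 + vecMulVec (∑ i ∈ s, Pi.single i (u i)) (Pi.single k 1)) := by
    intro s
    induction s using Finset.induction_on with
    | empty => simpa using IsElementary.one
    | insert a s ha ih =>
      intro hk
      have hak : a ≠ k := fun h => hk (h ▸ Finset.mem_insert_self a s)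
      have hdot : Pi.single k (1 : R) ⬝ᵥ Pi.single a (u a) = 0 := by
        simp [dotProduct_single, hak]
      rw [Finset.sum_insert ha, add_vecMulVec, add_comm (vecMulVec _ _), ← add_assoc,
        ← one_add_vecMulVec_mul_one_add_vecMulVec hdot, vecMulVec_single_single]
      exact (ih fun h => hk (Finset.mem_insert_of_mem h)).mul (isElementary_one_add_single hak _)
  have hsum : ∑ i ∈ Finset.univ.erase k, Pi.single i (u i) = u := by
    rw [Finset.sum_erase _ (by simp [hu]), Finset.univ_sum_single]
  simpa only [hsum] using partial_sums _ (Finset.notMem_erase k Finset.univ)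

theorem isElementary_one_add_single_vecMulVec {k : ι} {v : ι → R} (hv : v k = 0) :
    IsElementary (1 + vecMulVec (Pi.single k 1) v) := by
  simpa using (isElementary_one_add_vecMulVec_single hv).transpose

theorem isElementary_one_add_vecMulVec {k : ι} {m n : ι → R} (hn : n k = 0)
    (hnm : n ⬝ᵥ m = 0) : IsElementary (1 + vecMulVec m n) := by
  set e : ι → R := Pi.single k 1
  set m' := m - m k • e
  have hm' : m' k = 0 := by simp [m', e]
  have hem' : e ⬝ᵥ m' = 0 := by simp [e, single_dotProduct, hm']
  have hnm' : n ⬝ᵥ m' = 0 := by simp [m', e, dotProduct_sub, dotProduct_single, hnm, hn]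
  have hne : n ⬝ᵥ e = 0 := by simp [e, dotProduct_single, hn]
  have hee : e ⬝ᵥ e = 1 := by simp [e]
  -- `1 + m' nᵀ` is the commutator of `1 + m' eᵀ` and `1 + e nᵀ`.
  have factor : 1 + vecMulVec m n =
      (1 + vecMulVec m' e) * (1 + vecMulVec e n) * (1 + vecMulVec (-m') e) *
        (1 + vecMulVec e (-n)) * (1 + vecMulVec e (m k • n)) := by
    rw [show vecMulVec m n = vecMulVec m' n + m k • vecMulVec e n by
      rw [← smul_vecMulVec, ← add_vecMulVec, sub_add_cancel]]
    simp only [add_mul, mul_add, one_mul, mul_one, vecMulVec_mul_vecMulVec, hem', hnm', hne, hee,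
      neg_zero, zero_smul, one_smul, vecMulVec_zero, add_zero, neg_vecMulVec, vecMulVec_neg,
      vecMulVec_smul, smul_zero, mul_neg, neg_mul, Matrix.mul_smul]
    abel
  rw [factor]
  exact ((((isElementary_one_add_vecMulVec_single hm').mul
    (isElementary_one_add_single_vecMulVec hn)).mul
    (isElementary_one_add_vecMulVec_single (by simp [hm']))).mul
    (isElementary_one_add_single_vecMulVec (by simp [hn]))).mul
    (isElementary_one_add_single_vecMulVec (by simp [hn]))

def ElementaryReaches (v w : ι → R) : Prop :=
  ∃ E : Matrix ι ι R, IsElementary E ∧ v ᵥ* E = w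

theorem ElementaryReaches.trans {u v w : ι → R} (huv : ElementaryReaches u v)
    (hvw : ElementaryReaches v w) : ElementaryReaches u w := by
  obtain ⟨E, hE, rfl⟩ := huv
  obtain ⟨F, hF, rfl⟩ := hvw
  exact ⟨E * F, hE.mul hF, (vecMul_vecMul u E F).symm⟩

theorem elementaryReaches_add {k : ι} {v m n : ι → R} (hvm : v ⬝ᵥ m = 1) (hn : n k = 0)
    (hnm : n ⬝ᵥ m = 0) : ElementaryReaches v (v + n) :=
  ⟨_, isElementary_one_add_vecMulVec hn hnm, by
    rw [vecMul_add, vecMul_one, vecMul_vecMulVec, hvm, one_smul]⟩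

end Elementary

section FinThree

variable {R : Type} [CommRing R]

theorem elementaryReaches_fin_three {a b c a' b' x y z : R} (hvm : a * x + b * y + c * z = 1)
    (hnm : (a' - a) * x + (b' - b) * y = 0) : ElementaryReaches ![a, b, c] ![a', b', c] := by
  have h := elementaryReaches_add (k := 2) (v := ![a, b, c]) (m := ![x, y, z])
    (n := ![a' - a, b' - b, 0]) (by simpa [dotProduct, Fin.sum_univ_three] using hvm) rfl
    (by simpa [dotProduct, Fin.sum_univ_three] using hnm)
  convert h using 1
  ext j
  fin_cases j <;> simp

theorem isElementary_diagonal_unit_inv_one (u : Rˣ) :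
    IsElementary (diagonal ![(u : R), ↑u⁻¹, 1]) := by
  have factor : diagonal ![(u : R), ↑u⁻¹, 1] =
      (1 + single 0 1 ((u : R) - 1)) * (1 + single 1 0 1) *
        (1 + single 0 1 (((u⁻¹ : Rˣ) : R) - 1)) * (1 + single 1 0 (-(u : R))) := by
    ext i j
    fin_cases i <;> fin_cases j <;>
      simp [mul_apply, Fin.sum_univ_three, one_apply, single_apply, mul_sub]
  rw [factor]
  exact (((isElementary_one_add_single (by decide) _).mul
    (isElementary_one_add_single (by decide) _)).mul
    (isElementary_one_add_single (by decide) _)).mul (isElementary_one_add_single (by decide) _)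

theorem elementaryReaches_unit_mul_inv_mul (u : Rˣ) (p q c : R) :
    ElementaryReaches ![p, q, c] ![u * p, ↑u⁻¹ * q, c] :=
  ⟨_, isElementary_diagonal_unit_inv_one u, by
    ext j
    fin_cases j <;> simp [vecMul_diagonal, mul_comm]⟩

theorem IsUnimodular.elementaryReaches_unit_mul (u : Rˣ) {a b c : R}
    (h : IsUnimodular ![a, b, c]) : ElementaryReaches ![a, b, c] ![u * a, u * b, c] := by
  obtain ⟨w, hw⟩ := h
  simp only [Fin.sum_univ_three, cons_val_zero, cons_val_one, cons_val_two, head_cons,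
    tail_cons] at hw
  set x := w 0
  set y := w 1
  set z := w 2
  -- The three moves realise `E₁₂(1)`, `E₂₁(u - 1)`, `E₁₂(-u⁻¹)` on `(1, 0)`, conjugated by `P`.
  have add_perp : ElementaryReaches ![a, b, c] ![a - y, b + x, c] :=
    elementaryReaches_fin_three (x := x) (y := y) (z := z) hw (by ring)
  have scale : ElementaryReaches ![a - y, b + x, c] ![u * a - y, u * b + x, c] :=
    elementaryReaches_fin_three (x := -b) (y := a) (z := z) (by linear_combination hw) (by ring)
  have sub_perp : ElementaryReaches ![u * a - y, u * b + x, c] ![u * a, u * b, c] :=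
    elementaryReaches_fin_three (x := ↑u⁻¹ * x) (y := ↑u⁻¹ * y) (z := z)
      (by linear_combination hw + (a * x + b * y) * u.inv_mul) (by ring)
  exact add_perp.trans (scale.trans sub_perp)

end FinThree

/-- If `-1` is a square in `R` and `(a₁, a₂, a₃)` is
unimodular, then `(-a₁, a₂, a₃)` and `(a₁, a₂, a₃)` are in the same
elementary orbit. -/
theorem neg_first_coordinate_elementary
    (R : Type) [CommRing R] (a₁ a₂ a₃ : R)
    (hsq : ∃ i : R, i ^ 2 = -1)
    (hu : IsUnimodular ![a₁, a₂, a₃]) :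
    ∃ E : Matrix (Fin 3) (Fin 3) R, IsElementary E ∧
      ![a₁, a₂, a₃] ᵥ* E = ![-a₁, a₂, a₃] := by
  obtain ⟨i, hi⟩ := hsq
  let u : Rˣ := ⟨i, -i, by linear_combination -hi, by linear_combination -hi⟩
  have hu2 : (u * u : R) = -1 := by
    show i * i = -1
    linear_combination hi
  obtain ⟨E, hE, hvE⟩ :=
    (hu.elementaryReaches_unit_mul u).trans (elementaryReaches_unit_mul_inv_mul u _ _ a₃)
  refine ⟨E, hE, ?_⟩
  rwa [← mul_assoc, hu2, neg_one_mul, Units.inv_mul_cancel_left] at hvE
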